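/- arXiv:2310.15441 — 6 statements merged into one kernel-verified Lean document; each statement's English description precedes it below -/
import Mathlib

section
/- For a standard normal random variable ξ ~ N(0,1), the expectation of ln|ξ| equals -(γ + ln 2)/2, where γ is the Euler–Mascheroni constant. Equivalently, E[ln|ξ|] = ln(1/(√2 · e^{γ/2})). -/
open MeasureTheory ProbabilityTheory Set Filter Topology Asymptotics Real

/-!
Since `log |x| * exp (-x ^ 2 / 2)` is even, the expectation is a half-line integral, and the
substitution `x = √(2t)` turns it, up to a constant, into
`∫ t ^ (-1/2) * (log 2 + log t) * exp (-t) = log 2 * Γ(1/2) + Γ'(1/2)`, the derivative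
coming from differentiating the Gamma integral under the integral sign. Conclude with
`Γ(1/2) = √π` and `Γ'(1/2) = -√π (γ + 2 log 2)`.
-/

namespace Real

lemma integrableOn_rpow_mul_log_mul_exp_neg {s : ℝ} (hs : 0 < s) :
    IntegrableOn (fun t ↦ t ^ (s - 1) * (log t * exp (-t))) (Ioi 0) := by
  have hexp_top : (fun t : ℝ ↦ exp (-t)) =O[atTop] (· ^ (-(s + 1 + 1))) := by
    simpa only [neg_one_mul] using (isLittleO_exp_neg_mul_rpow_atTop one_pos _).isBigO
  have hexp_bot : (fun t : ℝ ↦ exp (-t)) =O[𝓝[>] 0] (· ^ (-0 : ℝ)) := by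
    simp only [neg_zero, rpow_zero]
    exact (continuous_exp.comp continuous_neg).continuousWithinAt.isBigO_one ℝ
  refine mellin_convergent_of_isBigO_scalar (a := s + 1) (b := s / 2) ?_
    (isBigO_rpow_top_log_smul (lt_add_one _) hexp_top) (lt_add_one s)
    (isBigO_rpow_zero_log_smul (half_pos hs) hexp_bot) (half_lt_self hs)
  exact (continuousOn_log.mono (fun t ht ↦ ne_of_gt ht)).mul (by fun_prop)
    |>.locallyIntegrableOn measurableSet_Ioi

lemma hasDerivAt_Gamma_of_pos {s : ℝ} (hs : 0 < s) :
    HasDerivAt Gamma (∫ t in Ioi 0, t ^ (s - 1) * (log t * exp (-t))) s := by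
  have hΓ : HasDerivAt Complex.Gamma
      (∫ t : ℝ in Ioi 0, (t : ℂ) ^ ((s : ℂ) - 1) * (log t * exp (-t))) s := by
    refine (Complex.hasDerivAt_GammaIntegral (by simpa using hs)).congr_of_eventuallyEq ?_
    filter_upwards [Complex.continuous_re.isOpen_preimage _ isOpen_Ioi |>.mem_nhds
      (by simpa using hs)] with z hz using Complex.Gamma_eq_integral hz
  have hint : ∫ t : ℝ in Ioi 0, (t : ℂ) ^ ((s : ℂ) - 1) * (log t * exp (-t)) =
      ((∫ t in Ioi 0, t ^ (s - 1) * (log t * exp (-t)) : ℝ) : ℂ) := by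
    rw [← integral_complex_ofReal]
    refine setIntegral_congr_fun measurableSet_Ioi fun t ht ↦ ?_
    push_cast
    rw [← Complex.ofReal_one, ← Complex.ofReal_sub, Complex.ofReal_cpow (le_of_lt ht)]
  rw [hint] at hΓ
  simpa [Complex.Gamma_ofReal] using hΓ.real_of_complex

lemma integral_rpow_neg_half_mul_log_mul_exp_neg :
    ∫ t in Ioi 0, t ^ (-(1 / 2) : ℝ) * (log t * exp (-t)) =
      -√π * (eulerMascheroniConstant + 2 * log 2) := by
  have h := hasDerivAt_Gamma_of_pos one_half_pos
  rw [show (1 / 2 : ℝ) - 1 = -(1 / 2) by norm_num] at h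
  exact h.unique hasDerivAt_Gamma_one_half

lemma integral_rpow_neg_half_mul_exp_neg :
    ∫ t in Ioi 0, t ^ (-(1 / 2) : ℝ) * exp (-t) = √π := by
  rw [← Gamma_one_half_eq, Gamma_eq_integral one_half_pos]
  norm_num [mul_comm]

lemma integrableOn_rpow_neg_half_mul_exp_neg :
    IntegrableOn (fun t ↦ t ^ (-(1 / 2) : ℝ) * exp (-t)) (Ioi 0) := by
  have := GammaIntegral_convergent one_half_pos
  norm_num [mul_comm] at this
  exact this

lemma integral_rpow_neg_half_mul_log_mul_exp_neg_div_two :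
    ∫ t in Ioi 0, t ^ (-(1 / 2) : ℝ) * (log t * exp (-t / 2)) =
      -√2 * √π * (eulerMascheroniConstant + log 2) := by
  have hlog := integrableOn_rpow_mul_log_mul_exp_neg one_half_pos
  rw [show (1 / 2 : ℝ) - 1 = -(1 / 2) by norm_num] at hlog
  have hscale : ∀ u ∈ Ioi (0 : ℝ),
      (2 * u) ^ (-(1 / 2) : ℝ) * (log (2 * u) * exp (-(2 * u) / 2)) =
        (√2)⁻¹ * (log 2 * (u ^ (-(1 / 2) : ℝ) * exp (-u)) +
          u ^ (-(1 / 2) : ℝ) * (log u * exp (-u))) := by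
    intro u hu
    rw [mul_rpow zero_le_two (le_of_lt hu), log_mul two_ne_zero (ne_of_gt hu),
      rpow_neg zero_le_two, ← sqrt_eq_rpow]
    ring_nf
  have h := integral_comp_mul_left_Ioi (fun t ↦ t ^ (-(1 / 2) : ℝ) * (log t * exp (-t / 2))) 0
    two_pos
  rw [mul_zero, setIntegral_congr_fun measurableSet_Ioi hscale, integral_const_mul,
    integral_add (integrableOn_rpow_neg_half_mul_exp_neg.const_mul _) hlog, integral_const_mul,
    integral_rpow_neg_half_mul_exp_neg, integral_rpow_neg_half_mul_log_mul_exp_neg,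
    smul_eq_mul] at h
  have hsqrt2 : (√2)⁻¹ = √2 / 2 := by rw [inv_eq_iff_eq_inv, inv_div, div_sqrt]
  rw [hsqrt2] at h
  linear_combination -2 * h
lemma integral_log_mul_exp_neg_sq_div_two :
    ∫ x in Ioi 0, log x * exp (-x ^ 2 / 2) =
      -√2 * √π * (eulerMascheroniConstant + log 2) / 4 := by
  have hsubst : ∀ t ∈ Ioi (0 : ℝ), ((1 / 2 : ℝ) * t ^ ((1 / 2 : ℝ) - 1)) •
      (log (t ^ (1 / 2 : ℝ)) * exp (-(t ^ (1 / 2 : ℝ)) ^ 2 / 2)) =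
      4⁻¹ * (t ^ (-(1 / 2) : ℝ) * (log t * exp (-t / 2))) := by
    intro t ht
    rw [log_rpow ht, ← sqrt_eq_rpow, sq_sqrt (le_of_lt ht), smul_eq_mul]
    norm_num
    ring
  rw [← integral_comp_rpow_Ioi_of_pos one_half_pos,
    setIntegral_congr_fun measurableSet_Ioi hsubst, integral_const_mul,
    integral_rpow_neg_half_mul_log_mul_exp_neg_div_two]
  ring

end Real

/-- For a standard normal random variable `ξ ~ N(0,1)`, the expectation of `ln |ξ|` equals
`-(γ + ln 2)/2`, where `γ` is the Euler–Mascheroni constant. -/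
theorem expectation_log_abs_gaussian :
    ∫ x, Real.log |x| ∂(gaussianReal 0 1) =
      -((Real.eulerMascheroniConstant + Real.log 2) / 2) := by
  calc ∫ x, log |x| ∂(gaussianReal 0 1)
      = ∫ x, gaussianPDFReal 0 1 x • log |x| :=
        integral_gaussianReal_eq_integral_smul one_ne_zero
    _ = ∫ x, (√(2 * π))⁻¹ * (log |x| * exp (-|x| ^ 2 / 2)) := by
      congr with x
      simp only [gaussianPDFReal, NNReal.coe_one, mul_one, sub_zero, sq_abs, smul_eq_mul]
      ring
    _ = 2 * ∫ x in Ioi 0, (√(2 * π))⁻¹ * (log x * exp (-x ^ 2 / 2)) :=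
      integral_comp_abs (f := fun y ↦ (√(2 * π))⁻¹ * (log y * exp (-y ^ 2 / 2)))
    _ = -((eulerMascheroniConstant + log 2) / 2) := by
      rw [integral_const_mul, integral_log_mul_exp_neg_sq_div_two, sqrt_mul zero_le_two]
      field_simp
      ring
end

section
/- The improper integral ∫₀^∞ e^{-x²} ln x dx equals -(√π/4)(γ + ln 4), where γ is the Euler–Mascheroni constant. -/
open MeasureTheory Set Real Filter

lemma gamma_deriv_integral_half :
    (∫ t in Ioi (0:ℝ), t ^ (-(1/2) : ℝ) * (Real.log t * Real.exp (-t))) =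
      -Real.sqrt Real.pi * (Real.eulerMascheroniConstant + 2 * Real.log 2) := by
  set D : ℂ := ∫ t in Ioi (0:ℝ), (t:ℂ) ^ ((1/2 : ℂ) - 1) * (Real.log t * Real.exp (-t)) with hD
  have h1 : HasDerivAt Complex.GammaIntegral D (1/2 : ℂ) :=
    Complex.hasDerivAt_GammaIntegral (by norm_num)
  have h2 : HasDerivAt Complex.Gamma D (1/2 : ℂ) := by
    refine h1.congr_of_eventuallyEq ?_
    have hmem : {z : ℂ | 0 < z.re} ∈ nhds (1/2 : ℂ) := by
      refine (Complex.continuous_re.isOpen_preimage _ isOpen_Ioi).mem_nhds ?_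
      simp [Set.mem_preimage]
    filter_upwards [hmem] with z hz
    exact Complex.Gamma_eq_integral hz
  have h2' : HasDerivAt Complex.Gamma D (((1/2 : ℝ) : ℂ)) := by
    convert h2 using 2; norm_num
  have h3 : HasDerivAt Real.Gamma D.re (1/2 : ℝ) := h2'.real_of_complex
  have h4 : D.re = -Real.sqrt Real.pi * (Real.eulerMascheroniConstant + 2 * Real.log 2) :=
    h3.unique (by simpa using Real.hasDerivAt_Gamma_one_half)
  have h5 : D = ((∫ t in Ioi (0:ℝ), t ^ (-(1/2) : ℝ) * (Real.log t * Real.exp (-t)) : ℝ) : ℂ) := by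
    have hre : ∀ r : ℝ, Complex.ofReal r = @RCLike.ofReal ℂ _ r := fun r => rfl
    rw [hD]
    conv_rhs => rw [hre, ← integral_ofReal]
    refine setIntegral_congr_fun measurableSet_Ioi fun t ht => ?_
    have ht' : (0:ℝ) ≤ t := (mem_Ioi.mp ht).le
    simp only [← hre]
    push_cast [Complex.ofReal_cpow ht']
    norm_num
  rw [← h4, h5, Complex.ofReal_re]

/-- The improper integral `∫₀^∞ e^{-x²} ln x dx` equals `-(√π/4)(γ + ln 4)`,
where `γ` is the Euler–Mascheroni constant. -/
theorem integral_exp_neg_sq_log :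
    ∫ x in Set.Ioi (0 : ℝ), Real.exp (-x ^ 2) * Real.log x =
      -(Real.sqrt Real.pi / 4) * (Real.eulerMascheroniConstant + Real.log 4) := by
  have hsub := integral_comp_rpow_Ioi_of_pos
    (g := fun t : ℝ => t ^ (-(1/2) : ℝ) * (Real.log t * Real.exp (-t))) (p := 2) two_pos
  rw [gamma_deriv_integral_half] at hsub
  have hcongr : (∫ x in Ioi (0:ℝ),
      ((2:ℝ) * x ^ ((2:ℝ) - 1)) • ((x ^ (2:ℝ)) ^ (-(1/2) : ℝ) *
        (Real.log (x ^ (2:ℝ)) * Real.exp (-(x ^ (2:ℝ)))))) =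
      ∫ x in Ioi (0:ℝ), 4 * (Real.exp (-x ^ 2) * Real.log x) := by
    refine setIntegral_congr_fun measurableSet_Ioi fun x hx => ?_
    have hx0 : (0:ℝ) < x := mem_Ioi.mp hx
    have hpow : x ^ (2:ℝ) = x ^ 2 := by
      rw [show (2:ℝ) = ((2:ℕ):ℝ) by norm_num, Real.rpow_natCast]
    have h1 : (x ^ (2:ℝ)) ^ (-(1/2) : ℝ) = x⁻¹ := by
      rw [← Real.rpow_mul hx0.le]
      norm_num
      exact Real.rpow_neg_one x
    have h2 : Real.log (x ^ (2:ℝ)) = 2 * Real.log x := Real.log_rpow hx0 2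
    have h3 : x ^ ((2:ℝ) - 1) = x := by
      norm_num
    rw [h1, h2, h3, hpow, smul_eq_mul]
    field_simp
    ring
  rw [hcongr, integral_const_mul] at hsub
  have hlog4 : Real.log 4 = 2 * Real.log 2 := by
    rw [show (4:ℝ) = 2 ^ 2 by norm_num, Real.log_pow]
    push_cast; ring
  rw [hlog4]
  linarith
end

section
/- Let (ξ_n)_{n≥0} be i.i.d. standard normal random variables and β > 0. If s ≥ 1 and s < β e^{γ/2}, then (s√2/β)^n |ξ_0 ξ_1 ⋯ ξ_{n-1}| → 0 almost surely as n → ∞. -/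
/-!
With `c = s√2/β` and `ξ_i ≠ 0` (which holds almost surely),
`c^n |ξ_0 ⋯ ξ_{n-1}| = exp (∑_{i<n} (log c + log |ξ_i|))`. By the strong law of large numbers the
averages of the summands converge almost surely to `log c + E log |ξ_0|`, and
`E log |ξ_0| = -(γ + log 2)/2` follows from `Γ'(1/2) = -√π (γ + 2 log 2)` by substituting
`t = x²`. Hence the limit is `log (s / (β e^{γ/2})) < 0`, the sums tend to `-∞` and the
product tends to `0`.
-/

open MeasureTheory ProbabilityTheory Filter Set Real Topology Finset
open scoped NNReal

theorem Real.hasDerivAt_Gamma_eq_integral {s : ℝ} (hs : 0 < s) :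
    HasDerivAt Gamma (∫ t in Ioi 0, t ^ (s - 1) * (log t * exp (-t))) s := by
  have hre : 0 < (s : ℂ).re := by simpa using hs
  have hΓ : Complex.GammaIntegral =ᶠ[𝓝 (s : ℂ)] Complex.Gamma := by
    filter_upwards [(Complex.continuous_re.isOpen_preimage _ isOpen_Ioi).mem_nhds hre]
      with z hz using (Complex.Gamma_eq_integral hz).symm
  have hC :=
    ((Complex.hasDerivAt_GammaIntegral hre).congr_of_eventuallyEq hΓ.symm).real_of_complex
  simp only [Complex.Gamma_ofReal, Complex.ofReal_re] at hC
  convert hC using 1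
  rw [← Complex.ofReal_re (∫ t in Ioi 0, _), ← integral_complex_ofReal]
  congr 1
  refine setIntegral_congr_fun measurableSet_Ioi fun t (ht : 0 < t) => ?_
  push_cast
  rw [Complex.ofReal_cpow ht.le]
  push_cast
  ring

theorem integral_Ioi_log_mul_exp_neg_sq :
    ∫ x in Ioi (0 : ℝ), log x * exp (-x ^ 2) =
      -√π * (eulerMascheroniConstant + 2 * log 2) / 4 := by
  have hΓ' := (hasDerivAt_Gamma_eq_integral one_half_pos).unique hasDerivAt_Gamma_one_half
  rw [← integral_comp_rpow_Ioi_of_pos one_half_pos, ← hΓ', ← integral_div]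
  refine setIntegral_congr_fun measurableSet_Ioi fun x (hx : 0 < x) => ?_
  have hsq : (x ^ (1 / 2 : ℝ)) ^ 2 = x := by rw [← sqrt_eq_rpow, sq_sqrt hx.le]
  rw [smul_eq_mul, hsq, log_rpow hx]
  ring

theorem abs_log_le_rpow_neg_half_add_rpow_half {x : ℝ} (hx : 0 < x) :
    |log x| ≤ 2 * (x ^ (-1 / 2 : ℝ) + x ^ (1 / 2 : ℝ)) := by
  have hupper : log x ≤ 2 * x ^ (1 / 2 : ℝ) := by
    simpa [div_eq_mul_inv, mul_comm] using log_le_rpow_div hx.le one_half_pos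
  have hlower : -log x ≤ 2 * x ^ (-1 / 2 : ℝ) := by
    have := log_le_rpow_div (inv_pos.2 hx).le one_half_pos
    rw [log_inv, inv_rpow hx.le, ← rpow_neg hx.le] at this
    linarith
  have := rpow_pos_of_pos hx (-1 / 2 : ℝ)
  have := rpow_pos_of_pos hx (1 / 2 : ℝ)
  exact abs_le.2 ⟨by linarith, by linarith⟩

theorem integrableOn_Ioi_log_mul_exp_neg_mul_sq {b : ℝ} (hb : 0 < b) :
    IntegrableOn (fun x => log x * exp (-b * x ^ 2)) (Ioi 0) := by
  have hdom := ((integrableOn_rpow_mul_exp_neg_mul_sq hb (by norm_num : (-1 : ℝ) < -1 / 2)).add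
    (integrableOn_rpow_mul_exp_neg_mul_sq hb (by norm_num : (-1 : ℝ) < 1 / 2))).const_mul 2
  refine hdom.mono' (by fun_prop) ((ae_restrict_iff' measurableSet_Ioi).2 <| ae_of_all _ ?_)
  intro x (hx : 0 < x)
  rw [norm_mul, norm_of_nonneg (exp_pos _).le, norm_eq_abs]
  calc |log x| * exp (-b * x ^ 2)
      ≤ 2 * (x ^ (-1 / 2 : ℝ) + x ^ (1 / 2 : ℝ)) * exp (-b * x ^ 2) :=
        mul_le_mul_of_nonneg_right (abs_log_le_rpow_neg_half_add_rpow_half hx) (exp_pos _).le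
    _ = _ := by rw [Pi.add_apply]; ring

theorem integral_Ioi_log_mul_exp_neg_sq_div_two :
    ∫ x in Ioi (0 : ℝ), log x * exp (-x ^ 2 / 2) =
      -√(2 * π) * (eulerMascheroniConstant + log 2) / 4 := by
  have h2 : (0 : ℝ) < √2 := by positivity
  have hscale := integral_comp_mul_left_Ioi (fun x => log x * exp (-x ^ 2 / 2)) 0 h2
  rw [mul_zero, smul_eq_mul, eq_inv_mul_iff_mul_eq₀ h2.ne'] at hscale
  have hsplit : ∀ x ∈ Ioi (0 : ℝ), log (√2 * x) * exp (-(√2 * x) ^ 2 / 2) =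
      log √2 * exp (-1 * x ^ 2) + log x * exp (-1 * x ^ 2) := fun x (hx : 0 < x) => by
    rw [log_mul h2.ne' hx.ne', mul_pow, sq_sqrt zero_le_two]
    ring_nf
  rw [← hscale, setIntegral_congr_fun measurableSet_Ioi hsplit,
    integral_add ((integrable_exp_neg_mul_sq one_pos).integrableOn.const_mul _)
      (integrableOn_Ioi_log_mul_exp_neg_mul_sq one_pos), integral_const_mul,
    integral_gaussian_Ioi]
  simp only [neg_one_mul, integral_Ioi_log_mul_exp_neg_sq, div_one, log_sqrt zero_le_two,
    sqrt_mul zero_le_two]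
  ring

theorem integrable_comp_abs_of_integrableOn_Ioi {E : Type*} [NormedAddCommGroup E] {f : ℝ → E}
    (hf : IntegrableOn f (Ioi 0)) :
    Integrable (fun x => f |x|) := by
  have hIoi : IntegrableOn (fun x => f |x|) (Ioi 0) :=
    hf.congr_fun (fun x (hx : 0 < x) => by rw [abs_of_pos hx]) measurableSet_Ioi
  have hIio : IntegrableOn (fun x => f |x|) (Iio 0) := by
    rw [← (Measure.measurePreserving_neg (volume : Measure ℝ)).integrableOn_comp_preimage
      (Homeomorph.neg ℝ).measurableEmbedding]
    simpa only [Function.comp_def, abs_neg, neg_preimage, neg_Iio, neg_zero] using hIoi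
  rw [← integrableOn_univ, ← Iio_union_Ici (a := (0 : ℝ)), integrableOn_union,
    integrableOn_Ici_iff_integrableOn_Ioi]
  exact ⟨hIio, hIoi⟩

theorem gaussianPDFReal_zero_one (x : ℝ) :
    gaussianPDFReal 0 1 x = (√(2 * π))⁻¹ * exp (-x ^ 2 / 2) := by
  simp [gaussianPDFReal]

theorem integrable_log_abs_gaussianReal : Integrable (fun x => log |x|) (gaussianReal 0 1) := by
  rw [gaussianReal_of_var_ne_zero 0 one_ne_zero, integrable_withDensity_iff_integrable_smul'
    (measurable_gaussianPDF 0 1) (ae_of_all _ fun _ => gaussianPDF_lt_top)]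
  simp only [toReal_gaussianPDF, gaussianPDFReal_zero_one, smul_eq_mul]
  have h := (integrableOn_Ioi_log_mul_exp_neg_mul_sq (b := 1 / 2) (by norm_num)).const_mul
    (√(2 * π))⁻¹
  refine (integrable_comp_abs_of_integrableOn_Ioi h).congr (ae_of_all _ fun x => ?_)
  simp only [sq_abs]
  ring_nf

theorem integral_log_abs_gaussianReal :
    ∫ x, log |x| ∂gaussianReal 0 1 = -(eulerMascheroniConstant + log 2) / 2 := by
  rw [integral_gaussianReal_eq_integral_smul one_ne_zero]
  have heven : ∀ x : ℝ, gaussianPDFReal 0 1 x • log |x| =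
      (√(2 * π))⁻¹ * (log |x| * exp (-|x| ^ 2 / 2)) := fun x => by
    rw [gaussianPDFReal_zero_one, sq_abs, smul_eq_mul]; ring
  simp only [heven]
  rw [integral_comp_abs (f := fun y => (√(2 * π))⁻¹ * (log y * exp (-y ^ 2 / 2))),
    integral_const_mul, integral_Ioi_log_mul_exp_neg_sq_div_two]
  field_simp
  ring

theorem strong_law_ae_comp {Ω α : Type*} {mΩ : MeasurableSpace Ω} {μ : Measure Ω}
    [MeasurableSpace α] {ν : Measure α} {ξ : ℕ → Ω → α} (hmeas : ∀ n, Measurable (ξ n))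
    (hindep : iIndepFun ξ μ) (hlaw : ∀ n, μ.map (ξ n) = ν) {g : α → ℝ} (hg : Measurable g)
    (hint : Integrable g ν) :
    ∀ᵐ ω ∂μ, Tendsto (fun n : ℕ => (∑ i ∈ range n, g (ξ i ω)) / n) atTop (𝓝 (∫ x, g x ∂ν)) := by
  have hident : ∀ i, IdentDistrib (g ∘ ξ i) (g ∘ ξ 0) μ μ := fun i =>
    IdentDistrib.comp ⟨(hmeas i).aemeasurable, (hmeas 0).aemeasurable, by rw [hlaw, hlaw]⟩ hg
  have hlln := strong_law_ae_real (fun i => g ∘ ξ i)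
    ((integrable_map_measure hg.aestronglyMeasurable (hmeas 0).aemeasurable).1 (hlaw 0 ▸ hint))
    (fun i j hij => (hindep.indepFun hij).comp hg hg) hident
  have hmean : ∫ ω, (g ∘ ξ 0) ω ∂μ = ∫ x, g x ∂ν := by
    rw [← hlaw 0, integral_map (hmeas 0).aemeasurable hg.aestronglyMeasurable, Function.comp_def]
  rw [hmean] at hlln
  exact hlln

theorem tendsto_sum_range_atBot_of_tendsto_average {a : ℕ → ℝ} {L : ℝ} (hL : L < 0)
    (h : Tendsto (fun n : ℕ => (∑ i ∈ range n, a i) / n) atTop (𝓝 L)) :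
    Tendsto (fun n => ∑ i ∈ range n, a i) atTop atBot := by
  refine (Tendsto.atTop_mul_neg hL tendsto_natCast_atTop_atTop h).congr' ?_
  filter_upwards [eventually_ne_atTop 0] with n hn
  field_simp

theorem ae_ne_of_map_eq_gaussianReal {Ω : Type*} {mΩ : MeasurableSpace Ω} {μ : Measure Ω}
    {X : Ω → ℝ} (hX : AEMeasurable X μ) {m : ℝ} {v : ℝ≥0} (hv : v ≠ 0)
    (hlaw : μ.map X = gaussianReal m v) (a : ℝ) : ∀ᵐ ω ∂μ, X ω ≠ a := by
  have := nullSingletonClass_gaussianReal (μ := m) hv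
  rw [← hlaw] at this
  exact ae_of_ae_map hX (Measure.ae_ne _ a)

/-- If `(ξ_n)` are i.i.d. standard normal, `β > 0`, `1 ≤ s` and `s < β e^{γ/2}`, then
`(s√2/β)^n |ξ_0 ⋯ ξ_{n-1}| → 0` almost surely. -/
theorem gaussian_product_tendsto_zero
    {Ω : Type*} [MeasureSpace Ω] [IsProbabilityMeasure (ℙ : Measure Ω)]
    (β s : ℝ) (hβ : 0 < β)
    (ξ : ℕ → Ω → ℝ) (hmeas : ∀ n, Measurable (ξ n))
    (hindep : iIndepFun ξ ℙ)
    (hgauss : ∀ n, Measure.map (ξ n) ℙ = gaussianReal 0 1)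
    (hs1 : 1 ≤ s) (hs2 : s < β * Real.exp (Real.eulerMascheroniConstant / 2)) :
    ∀ᵐ ω ∂ℙ, Tendsto
      (fun n => (s * Real.sqrt 2 / β) ^ n * |∏ i ∈ Finset.range n, ξ i ω|)
      atTop (nhds 0) := by
  have hs : 0 < s := one_pos.trans_le hs1
  set c := s * √2 / β
  have hc : 0 < c := by positivity
  have hmean : ∫ x, (log c + log |x|) ∂gaussianReal 0 1 < 0 := by
    rw [integral_add (integrable_const _) integrable_log_abs_gaussianReal, integral_const,
      integral_log_abs_gaussianReal, probReal_univ, one_smul]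
    have hratio : log c + -(eulerMascheroniConstant + log 2) / 2 =
        log (s / (β * exp (eulerMascheroniConstant / 2))) := by
      rw [log_div (by positivity) hβ.ne', log_mul hs.ne' (by positivity), log_sqrt zero_le_two,
        log_div hs.ne' (by positivity), log_mul hβ.ne' (by positivity), log_exp]
      ring
    rw [hratio]
    exact log_neg (by positivity) ((div_lt_one (by positivity)).2 hs2)
  filter_upwards [strong_law_ae_comp (g := fun x => log c + log |x|) hmeas hindep hgauss
      (by fun_prop) ((integrable_const (log c)).add integrable_log_abs_gaussianReal),
    ae_all_iff.2 fun i =>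
      ae_ne_of_map_eq_gaussianReal (hmeas i).aemeasurable one_ne_zero (hgauss i) 0]
    with ω hlln hne
  refine (tendsto_exp_atBot.comp (tendsto_sum_range_atBot_of_tendsto_average hmean hlln)).congr
    fun n => ?_
  simp only [Function.comp_apply, exp_sum, exp_add, exp_log hc, prod_mul_distrib, prod_const,
    card_range, abs_prod, fun i => exp_log (abs_pos.2 (hne i))]
end

section
/- Let a, b ∈ ℝ with a ≠ 0, β > 0, and let (ξ_n)_{n≥0} be i.i.d. standard normal random variables. Define x_0 = 0, l_0 = 0, and for n ≥ 0 set x_{n+1} = b/a + ξ_n/(2^{l_n} √2 a β), where l_{n+1} ∈ ℤ is chosen so that 2^{l_{n+1}}|b - a x_{n+1}| ∈ (1/2, 1]. Then for every n ≥ 1, |x_{n+1} - b/a| < (1/|2a|) (√2/β)^{n+1} |ξ_0 ⋯ ξ_n| almost surely (on the event where all x_k ≠ b/a so that l_k is well defined). -/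
/-!
Write `e n := |x n - b/a|` and `c n := (√2/β) |ξ n|`. The update rule gives
`e (n+1) = c n · 2^{-l n} / |2a|`, while the normalisation `2^{l (n+1)} |b - a x (n+1)| > 1/2`
reads `2^{-l (n+1)} < |2a| e (n+1) = c n · 2^{-l n}`. Iterating from `l 0 = 0` yields
`2^{-l n} < ∏_{i<n} c i` for `n ≥ 1`, and substituting this into the formula for `e (n+1)`
gives the bound.
-/

open Finset

theorem lt_prod_range_mul_of_lt_mul {α : Type*} [CommMonoidWithZero α] [PartialOrder α]
    [PosMulMono α] {u c : ℕ → α} (hc : ∀ n, 0 ≤ c n) (hu : ∀ n, u (n + 1) < c n * u n)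
    {n : ℕ} (hn : 1 ≤ n) : u n < (∏ i ∈ range n, c i) * u 0 := by
  induction n, hn using Nat.le_induction with
  | base => simpa using hu 0
  | succ n _ ih =>
    calc u (n + 1) < c n * u n := hu n
      _ ≤ c n * ((∏ i ∈ range n, c i) * u 0) := mul_le_mul_of_nonneg_left ih.le (hc n)
      _ = (∏ i ∈ range (n + 1), c i) * u 0 := by
        rw [prod_range_succ, mul_comm _ (c n), mul_assoc]

theorem inv_zpow_two_lt_abs_mul_abs_sub_div {a b y : ℝ} {k : ℤ} (ha : a ≠ 0)
    (h : 1 / 2 < (2 : ℝ) ^ k * |b - a * y|) : ((2 : ℝ) ^ k)⁻¹ < |2 * a| * |y - b / a| := by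
  have hb : |2 * a| * |y - b / a| = 2 * |b - a * y| :=
    calc |2 * a| * |y - b / a| = |-(2 * (b - a * y))| := by
          rw [← abs_mul]
          congr 1
          field_simp
          ring
      _ = 2 * |b - a * y| := by rw [abs_neg, abs_mul, abs_two]
  rw [hb, inv_lt_iff_one_lt_mul₀ (zpow_pos two_pos k)]
  linarith

theorem abs_div_zpow_mul_sqrt_two_mul (a β s : ℝ) (hβ : 0 < β) (k : ℤ) :
    |s / ((2 : ℝ) ^ k * √2 * a * β)| = √2 / β * |s| * ((2 : ℝ) ^ k)⁻¹ / |2 * a| := by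
  have hsqrt : (0 : ℝ) < √2 := by positivity
  rw [abs_div, abs_mul, abs_mul, abs_mul, abs_of_pos (zpow_pos (two_pos : (0 : ℝ) < 2) k),
    abs_of_pos hsqrt, abs_of_pos hβ, abs_mul, abs_two]
  field_simp
  rw [Real.sq_sqrt zero_le_two]

theorem error_upper_bound_general
    (a b β : ℝ) (ha : a ≠ 0) (hβ : 0 < β)
    (ξ x : ℕ → ℝ) (l : ℕ → ℤ)
    (hl0 : l 0 = 0)
    (hx : ∀ n, x (n + 1) = b / a + ξ n / ((2 : ℝ) ^ (l n) * Real.sqrt 2 * a * β))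
    (hl : ∀ n, (2 : ℝ) ^ (l (n + 1)) * |b - a * x (n + 1)| ∈ Set.Ioc (1 / 2 : ℝ) 1) :
    ∀ n, 1 ≤ n →
      |x (n + 1) - b / a| <
        (1 / |2 * a|) * (Real.sqrt 2 / β) ^ (n + 1) * |∏ i ∈ Finset.range (n + 1), ξ i| := by
  set c : ℕ → ℝ := fun n ↦ √2 / β * |ξ n|
  set v : ℕ → ℝ := fun n ↦ ((2 : ℝ) ^ l n)⁻¹
  have herror (n : ℕ) : |x (n + 1) - b / a| = c n * v n / |2 * a| := by
    rw [hx, add_sub_cancel_left, abs_div_zpow_mul_sqrt_two_mul a β _ hβ]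
  have h2a : 0 < |2 * a| := by positivity
  have hstep (n : ℕ) : v (n + 1) < c n * v n := by
    have := inv_zpow_two_lt_abs_mul_abs_sub_div ha (hl n).1
    rwa [herror, mul_div_cancel₀ _ h2a.ne'] at this
  intro n hn
  have hv_pos (i : ℕ) : 0 < v i := by positivity
  -- the normalisation at step `n + 1` forces `ξ n ≠ 0`
  have hcn : 0 < c n := pos_of_mul_pos_left ((hv_pos _).trans (hstep n)) (hv_pos n).le
  have hv := lt_prod_range_mul_of_lt_mul (fun i ↦ by positivity) hstep hn
  calc |x (n + 1) - b / a| = c n * v n / |2 * a| := herror n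
    _ < c n * ((∏ i ∈ range n, c i) * v 0) / |2 * a| := by gcongr
    _ = _ := by
      simp only [v, hl0, zpow_zero, inv_one, mul_one, c, prod_range_succ, prod_mul_distrib,
        prod_const, card_range, abs_mul, abs_prod]
      ring

/-- Upper bound on the error of the iterative scheme: if `x_{n+1} = b/a + ξ_n/(2^{l_n}√2 a β)`
with `2^{l_{n+1}}|b - a x_{n+1}| ∈ (1/2, 1]`, then for `n ≥ 1`,
`|x_{n+1} - b/a| < (1/|2a|)(√2/β)^{n+1}|ξ_0 ⋯ ξ_n|`. -/
theorem error_upper_bound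
    (a b β : ℝ) (ha : a ≠ 0) (hβ : 0 < β)
    (ξ x : ℕ → ℝ) (l : ℕ → ℤ)
    (hx0 : x 0 = 0) (hl0 : l 0 = 0)
    (hx : ∀ n, x (n + 1) = b / a + ξ n / ((2 : ℝ) ^ (l n) * Real.sqrt 2 * a * β))
    (hl : ∀ n, (2 : ℝ) ^ (l (n + 1)) * |b - a * x (n + 1)| ∈ Set.Ioc (1 / 2 : ℝ) 1) :
    ∀ n, 1 ≤ n →
      |x (n + 1) - b / a| <
        (1 / |2 * a|) * (Real.sqrt 2 / β) ^ (n + 1) * |∏ i ∈ Finset.range (n + 1), ξ i| :=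
  error_upper_bound_general a b β ha hβ ξ x l hl0 hx hl
end

section
/- Let a, b ∈ ℝ with a ≠ 0, β > 0, and let (ξ_n)_{n≥0} be i.i.d. standard normal random variables. Define x_0 = 0, l_0 = 0, and for n ≥ 0 set x_{n+1} = b/a + ξ_n/(2^{l_n} √2 a β), where l_{n+1} ∈ ℤ satisfies 2^{l_{n+1}}|b - a x_{n+1}| ∈ (1/2, 1]. Then for every n ≥ 0, |x_{n+1} - b/a| ≥ (1/|a|) (1/(√2 β))^{n+1} |ξ_0 ⋯ ξ_n|. -/
open Finset

/- Writing `e n = |x (n+1) - b/a|`, the recursion gives `e n = |ξ n| / (√2 β |a| 2^{l n})`,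
and the normalisation `2^{l (n+1)} |a| e n ≤ 1` turns this into
`e (n+1) ≥ (|ξ (n+1)| / (√2 β)) e n`; iterating from `l 0 = 0` gives the product bound. -/

theorem mul_prod_range_le_of_mul_le_succ {R : Type*} [CommSemiring R] [PartialOrder R]
    [IsOrderedRing R] {c r : ℕ → R} {K : R} (hr : ∀ n, 0 ≤ r n) (h0 : K * r 0 ≤ c 0)
    (hs : ∀ n, r (n + 1) * c n ≤ c (n + 1)) (n : ℕ) :
    K * ∏ i ∈ range (n + 1), r i ≤ c n := by
  induction n with
  | zero => simpa using h0
  | succ n ih =>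
    calc K * ∏ i ∈ range (n + 1 + 1), r i = r (n + 1) * (K * ∏ i ∈ range (n + 1), r i) := by
          rw [prod_range_succ]; ring
      _ ≤ r (n + 1) * c n := mul_le_mul_of_nonneg_left ih (hr _)
      _ ≤ c (n + 1) := hs n

theorem abs_sub_div_eq_of_eq_div_add {a b β ξ y : ℝ} {k : ℤ} (hβ : 0 < β)
    (hy : y = b / a + ξ / ((2 : ℝ) ^ k * Real.sqrt 2 * a * β)) :
    |y - b / a| = |ξ| / (Real.sqrt 2 * β) / (|a| * 2 ^ k) := by
  rw [hy, add_sub_cancel_left, abs_div, abs_mul, abs_mul, abs_mul, abs_of_pos hβ,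
    abs_of_pos (zpow_pos (two_pos : (0 : ℝ) < 2) k), abs_of_nonneg (Real.sqrt_nonneg 2)]
  ring

theorem abs_sub_mul_eq_abs_mul_abs_sub_div {a b : ℝ} (ha : a ≠ 0) (y : ℝ) :
    |b - a * y| = |a| * |y - b / a| := by
  rw [← abs_mul, abs_sub_comm, mul_sub, mul_div_cancel₀ b ha]

theorem error_lower_bound_general
    (a b β : ℝ) (ha : a ≠ 0) (hβ : 0 < β)
    (ξ x : ℕ → ℝ) (l : ℕ → ℤ)
    (hl0 : l 0 = 0)
    (hx : ∀ n, x (n + 1) = b / a + ξ n / ((2 : ℝ) ^ (l n) * Real.sqrt 2 * a * β))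
    (hl : ∀ n, (2 : ℝ) ^ (l (n + 1)) * |b - a * x (n + 1)| ∈ Set.Ioc (1 / 2 : ℝ) 1) :
    ∀ n,
      (1 / |a|) * (1 / (Real.sqrt 2 * β)) ^ (n + 1) * |∏ i ∈ Finset.range (n + 1), ξ i| ≤
        |x (n + 1) - b / a| := by
  set r : ℕ → ℝ := fun n ↦ |ξ n| / (Real.sqrt 2 * β)
  have herr (n : ℕ) : |x (n + 1) - b / a| = r n / (|a| * 2 ^ l n) :=
    abs_sub_div_eq_of_eq_div_add hβ (hx n)
  have hnorm (n : ℕ) : (|a| * 2 ^ l (n + 1)) * |x (n + 1) - b / a| ≤ 1 := by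
    have := (hl n).2
    rw [abs_sub_mul_eq_abs_mul_abs_sub_div ha] at this
    linarith
  have hstep (n : ℕ) : r (n + 1) * |x (n + 1) - b / a| ≤ |x (n + 1 + 1) - b / a| := by
    have hd : 0 < |a| * (2 : ℝ) ^ l (n + 1) := by positivity
    rw [herr (n + 1), le_div_iff₀ hd]
    calc r (n + 1) * |x (n + 1) - b / a| * (|a| * 2 ^ l (n + 1))
        = r (n + 1) * ((|a| * 2 ^ l (n + 1)) * |x (n + 1) - b / a|) := by ring
      _ ≤ r (n + 1) * 1 := mul_le_mul_of_nonneg_left (hnorm n) (by positivity)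
      _ = r (n + 1) := mul_one _
  intro n
  calc (1 / |a|) * (1 / (Real.sqrt 2 * β)) ^ (n + 1) * |∏ i ∈ range (n + 1), ξ i|
      = (1 / |a|) * ∏ i ∈ range (n + 1), r i := by
        simp only [r, abs_prod, prod_div_distrib, prod_const, card_range]; ring
    _ ≤ |x (n + 1) - b / a| :=
        mul_prod_range_le_of_mul_le_succ (fun _ ↦ by positivity)
          (by rw [herr 0, hl0, zpow_zero, mul_one, one_div_mul_eq_div]) hstep n

/-- Lower bound on the error of the iterative scheme: if `x_{n+1} = b/a + ξ_n/(2^{l_n}√2 a β)`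
with `2^{l_{n+1}}|b - a x_{n+1}| ∈ (1/2, 1]`, then for every `n ≥ 0`,
`|x_{n+1} - b/a| ≥ (1/|a|)(1/(√2 β))^{n+1}|ξ_0 ⋯ ξ_n|`. -/
theorem error_lower_bound
    (a b β : ℝ) (ha : a ≠ 0) (hβ : 0 < β)
    (ξ x : ℕ → ℝ) (l : ℕ → ℤ)
    (hx0 : x 0 = 0) (hl0 : l 0 = 0)
    (hx : ∀ n, x (n + 1) = b / a + ξ n / ((2 : ℝ) ^ (l n) * Real.sqrt 2 * a * β))
    (hl : ∀ n, (2 : ℝ) ^ (l (n + 1)) * |b - a * x (n + 1)| ∈ Set.Ioc (1 / 2 : ℝ) 1) :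
    ∀ n,
      (1 / |a|) * (1 / (Real.sqrt 2 * β)) ^ (n + 1) * |∏ i ∈ Finset.range (n + 1), ξ i| ≤
        |x (n + 1) - b / a| :=
  error_lower_bound_general a b β ha hβ ξ x l hl0 hx hl
end

section
/- Fix r, p ∈ ℤ with r < p, β > 0, and a, b ∈ ℝ with a ≠ 0. Let Ω_{r,p} = { ±Σ_{i=r}^{p-1} q_i 2^i : q_i ∈ {0,1} } and let B(β, Ω_{r,p}, H) denote the Boltzmann distribution on Ω_{r,p} with weights proportional to e^{-β² H(x)} for H(x) = (ax - b)². Then as p → +∞ and r → -∞, the distributions B(β, Ω_{r,p}, (ax-b)²) converge in distribution to the normal law N(b/a, 1/(2a²β²)). -/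
/-!
Writing `Ω_{r,p}` in binary shows it is the lattice `2^r ℤ` cut to `|m| < 2^{p-r}`, i.e. to the
window `(-2^p, 2^p)`. Hence the Boltzmann expectation of `f` is a ratio of two Riemann sums of mesh
`2^r`, of `g f` and of `g`, where `g(x) = e^{-β²(ax-b)²} = e^{-a²β²(x-b/a)²}`. Each Riemann sum is
the integral of a step function; a Gaussian of half the rate dominates these step functions once
the mesh is at most `1`, so by dominated convergence the sums tend to `∫ g f` and `∫ g`, and
`∫ g f / ∫ g` is the mean of `f` under `N(b/a, 1/(2a²β²))`.
-/

open MeasureTheory ProbabilityTheory Filter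

open scoped Classical in
/-- The set `Ω_{r,p} = { ±Σ_{i=r}^{p-1} q_i 2^i : q_i ∈ {0,1} }`. -/
noncomputable def omegaSet (r p : ℤ) : Finset ℝ :=
  ((Finset.Icc r (p - 1)).powerset.image fun S => ∑ i ∈ S, (2 : ℝ) ^ i) ∪
    ((Finset.Icc r (p - 1)).powerset.image fun S => -∑ i ∈ S, (2 : ℝ) ^ i)

/-- The Boltzmann distribution on a finite set `S` with inverse-temperature parameter `β` and
target function `H`: the probability of `x ∈ S` is `e^{-β²H(x)} / Σ_{y∈S} e^{-β²H(y)}`. -/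
noncomputable def boltzmann (β : ℝ) (S : Finset ℝ) (H : ℝ → ℝ) : Measure ℝ :=
  ∑ x ∈ S,
    (ENNReal.ofReal (Real.exp (-β ^ 2 * H x) / ∑ y ∈ S, Real.exp (-β ^ 2 * H y))) •
      Measure.dirac x

open Topology

theorem integral_indicator_floor (φ : ℤ → ℝ) (s : Finset ℤ) :
    ∫ y : ℝ, (s : Set ℤ).indicator φ ⌊y⌋ = ∑ m ∈ s, φ m := by
  have hsum : (fun y : ℝ => (s : Set ℤ).indicator φ ⌊y⌋) =
      fun y => ∑ m ∈ s, (Set.Ico (m : ℝ) (m + 1)).indicator (fun _ => φ m) y := by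
    funext y
    simp only [Set.indicator_apply, Set.mem_Ico, ← Int.floor_eq_iff, Finset.sum_ite_eq,
      Finset.mem_coe]
  rw [hsum, integral_finsetSum _ fun m _ => (integrable_indicator_iff measurableSet_Ico).2
    (integrableOn_const (by simp))]
  simp [integral_indicator_const _ measurableSet_Ico]

theorem integral_indicator_floor_div (φ : ℤ → ℝ) (s : Finset ℤ) {h : ℝ} (hh : 0 < h) :
    ∫ x, (s : Set ℤ).indicator φ ⌊x / h⌋ = h * ∑ m ∈ s, φ m := by
  rw [Measure.integral_comp_div (fun y => (s : Set ℤ).indicator φ ⌊y⌋), integral_indicator_floor,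
    abs_of_pos hh, smul_eq_mul]

theorem floor_div_mul_mem_Ioc {h : ℝ} (hh : 0 < h) (x : ℝ) :
    (⌊x / h⌋ : ℝ) * h ∈ Set.Ioc (x - h) x := by
  constructor
  · have := Int.lt_floor_add_one (x / h)
    rw [div_lt_iff₀ hh] at this
    linarith
  · exact (le_div_iff₀ hh).1 (Int.floor_le _)

theorem floor_div_mem_Ioo {h x : ℝ} (hh : 0 < h) {N : ℤ} (hx : |x| + h < N * h) :
    ⌊x / h⌋ ∈ Finset.Ioo (-N) N := by
  have ⟨hlo, hhi⟩ := abs_lt.1 (show |x| < N * h - h by linarith)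
  rw [Finset.mem_Ioo, Int.floor_lt, ← Int.add_one_le_iff, Int.le_floor, le_div_iff₀ hh,
    div_lt_iff₀ hh]
  push_cast
  constructor <;> linarith

theorem tendsto_mul_sum_Ioo_integral {ι : Type*} {l : Filter ι} [l.IsCountablyGenerated]
    {G B : ℝ → ℝ} (hG : Continuous G) (hB : Integrable B)
    (hGB : ∀ x y, |y - x| ≤ 1 → |G y| ≤ B x) {h : ι → ℝ} (hh : ∀ k, 0 < h k)
    (h0 : Tendsto h l (𝓝 0)) {N : ι → ℤ} (hN : Tendsto (fun k => N k * h k) l atTop) :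
    Tendsto (fun k => h k * ∑ m ∈ Finset.Ioo (-N k) (N k), G (m * h k)) l (𝓝 (∫ x, G x)) := by
  let F : ι → ℝ → ℝ := fun k x =>
    (Finset.Ioo (-N k) (N k) : Set ℤ).indicator (fun m => G (m * h k)) ⌊x / h k⌋
  refine Tendsto.congr (fun k => integral_indicator_floor_div _ _ (hh k)) ?_
  have hsmall : ∀ᶠ k in l, h k ≤ 1 := h0 (Iic_mem_nhds one_pos)
  refine tendsto_integral_filter_of_dominated_convergence B (F := F) ?_ ?_ hB ?_
  · refine Eventually.of_forall fun k => Measurable.aestronglyMeasurable ?_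
    exact (Measurable.of_discrete (f := (Finset.Ioo (-N k) (N k) : Set ℤ).indicator
      fun m => G (m * h k))).comp (measurable_id.div_const (h k)).floor
  · filter_upwards [hsmall] with k hk
    refine Eventually.of_forall fun x => (norm_indicator_le_norm_self _ _).trans (hGB x _ ?_)
    have ⟨hlo, hhi⟩ := floor_div_mul_mem_Ioc (hh k) x
    exact abs_le.2 ⟨by linarith, by linarith⟩
  · refine Eventually.of_forall fun x => ?_
    have hconv : Tendsto (fun k => (⌊x / h k⌋ : ℝ) * h k) l (𝓝 x) :=
      tendsto_of_tendsto_of_tendsto_of_le_of_le (by simpa using tendsto_const_nhds.sub h0)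
        tendsto_const_nhds (fun k => (floor_div_mul_mem_Ioc (hh k) x).1.le)
        (fun k => (floor_div_mul_mem_Ioc (hh k) x).2)
    refine ((hG.tendsto x).comp hconv).congr' ?_
    filter_upwards [hsmall, hN.eventually_gt_atTop (|x| + 1)] with k hk hkN
    simp only [F, Function.comp_apply, Set.indicator_of_mem
      (Finset.mem_coe.2 (floor_div_mem_Ioo (hh k) (by linarith : |x| + h k < N k * h k)))]

theorem exp_neg_mul_sq_sub_le {c : ℝ} (hc : 0 ≤ c) (μ : ℝ) {x y : ℝ} (hxy : |y - x| ≤ 1) :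
    Real.exp (-c * (y - μ) ^ 2) ≤ Real.exp c * Real.exp (-(c / 2) * (x - μ) ^ 2) := by
  rw [← Real.exp_add, Real.exp_le_exp]
  have hyx : (y - x) ^ 2 ≤ 1 := (sq_le_one_iff_abs_le_one (y - x)).2 hxy
  have hsq : (x - μ) ^ 2 ≤ 2 * (y - μ) ^ 2 + 2 := by nlinarith [sq_nonneg (2 * y - μ - x)]
  nlinarith [mul_le_mul_of_nonneg_left hsq hc]

theorem tendsto_mul_sum_Ioo_gaussian {ι : Type*} {l : Filter ι} [l.IsCountablyGenerated]
    (f : BoundedContinuousFunction ℝ ℝ) {c : ℝ} (hc : 0 < c) (μ : ℝ) {h : ι → ℝ}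
    (hh : ∀ k, 0 < h k) (h0 : Tendsto h l (𝓝 0)) {N : ι → ℤ}
    (hN : Tendsto (fun k => N k * h k) l atTop) :
    Tendsto (fun k => h k * ∑ m ∈ Finset.Ioo (-N k) (N k),
        Real.exp (-c * (m * h k - μ) ^ 2) * f (m * h k)) l
      (𝓝 (∫ x, Real.exp (-c * (x - μ) ^ 2) * f x)) := by
  refine tendsto_mul_sum_Ioo_integral (by fun_prop)
    (((integrable_exp_neg_mul_sq (half_pos hc)).comp_sub_right μ).const_mul (Real.exp c * ‖f‖))
    (fun x y hxy => ?_) hh h0 hN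
  rw [abs_mul, abs_of_pos (Real.exp_pos _), mul_right_comm]
  exact mul_le_mul (exp_neg_mul_sq_sub_le hc.le μ hxy) ((Real.norm_eq_abs _).symm.trans_le
    (f.norm_coe_le_norm y)) (abs_nonneg _) (by positivity)

theorem integral_gaussianReal_eq_div {c : ℝ} (hc : 0 < c) (μ : ℝ) (f : ℝ → ℝ) :
    ∫ x, f x ∂gaussianReal μ (1 / (2 * c)).toNNReal =
      (∫ x, Real.exp (-c * (x - μ) ^ 2) * f x) / ∫ x, Real.exp (-c * (x - μ) ^ 2) := by
  set v := (1 / (2 * c)).toNNReal with hv_def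
  have hv : v ≠ 0 := by simpa [hv_def] using hc
  have hexp : ∀ x, -(x - μ) ^ 2 / (2 * (v : ℝ)) = -c * (x - μ) ^ 2 := by
    intro x
    rw [hv_def, Real.coe_toNNReal _ (by positivity)]
    field_simp
  calc ∫ x, f x ∂gaussianReal μ v
      = (∫ x, gaussianPDFReal μ v x * f x) / ∫ x, gaussianPDFReal μ v x := by
        rw [integral_gaussianReal_eq_integral_smul hv, integral_gaussianPDFReal_eq_one μ hv,
          div_one]
        simp only [smul_eq_mul]
    _ = _ := by
      simp only [gaussianPDFReal, hexp, mul_assoc, integral_const_mul]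
      exact mul_div_mul_left _ _ (by positivity)

theorem integral_exp_neg_mul_sq_sub_pos {c : ℝ} (hc : 0 < c) (μ : ℝ) :
    0 < ∫ x, Real.exp (-c * (x - μ) ^ 2) := by
  rw [integral_sub_right_eq_self (fun x => Real.exp (-c * x ^ 2)), integral_gaussian]
  positivity

theorem image_sum_two_pow_powerset_range (n : ℕ) :
    (Finset.range n).powerset.image (fun T => ∑ j ∈ T, 2 ^ j) = Finset.range (2 ^ n) := by
  ext m
  simp only [Finset.mem_image, Finset.mem_powerset, Finset.mem_range]
  constructor
  · rintro ⟨T, hT, rfl⟩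
    exact Nat.geomSum_lt le_rfl fun j hj => Finset.mem_range.1 (hT hj)
  · refine fun hm =>
      ⟨m.bitIndices.toFinset, fun j hj => ?_, Finset.sum_toFinset_bitIndices_two_pow m⟩
    have := (Nat.two_pow_le_of_mem_bitIndices (List.mem_toFinset.1 hj)).trans_lt hm
    exact Finset.mem_range.2 ((Nat.pow_lt_pow_iff_right (by norm_num)).1 this)

theorem Icc_sub_one_eq_image_range (r p : ℤ) :
    Finset.Icc r (p - 1) = (Finset.range (p - r).toNat).image fun j : ℕ => r + j := by
  ext i
  simp only [Finset.mem_Icc, Finset.mem_image, Finset.mem_range]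
  constructor
  · exact fun hi => ⟨(i - r).toNat, by omega, by omega⟩
  · rintro ⟨j, hj, rfl⟩
    omega

open scoped Classical in
theorem image_powerset_Icc_sum_two_zpow (r p : ℤ) :
    (Finset.Icc r (p - 1)).powerset.image (fun S => ∑ i ∈ S, (2 : ℝ) ^ i) =
      (Finset.range (2 ^ (p - r).toNat)).image fun m : ℕ => (m : ℝ) * 2 ^ r := by
  rw [Icc_sub_one_eq_image_range, Finset.powerset_image, Finset.image_image,
    ← image_sum_two_pow_powerset_range, Finset.image_image]
  refine Finset.image_congr fun T _ => ?_
  simp only [Function.comp_apply]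
  rw [Finset.sum_image fun _ _ _ _ h => by simpa using h, Nat.cast_sum, Finset.sum_mul]
  refine Finset.sum_congr rfl fun j _ => ?_
  rw [zpow_add₀ two_ne_zero, zpow_natCast, mul_comm]
  norm_cast

theorem omegaSet_eq_image (r p : ℤ) :
    omegaSet r p = (Finset.Ioo (-2 ^ (p - r).toNat) (2 ^ (p - r).toNat)).image
      fun m : ℤ => (m : ℝ) * 2 ^ r := by
  classical
  have hneg : ((Finset.Icc r (p - 1)).powerset.image fun S => -∑ i ∈ S, (2 : ℝ) ^ i) =
      ((Finset.Icc r (p - 1)).powerset.image fun S => ∑ i ∈ S, (2 : ℝ) ^ i).image Neg.neg := by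
    rw [Finset.image_image]; rfl
  rw [omegaSet, hneg, image_powerset_Icc_sum_two_zpow]
  ext x
  simp only [Finset.mem_union, Finset.mem_image, Finset.mem_range, Finset.mem_Ioo]
  constructor
  · rintro (⟨m, hm, rfl⟩ | ⟨_, ⟨m, hm, rfl⟩, rfl⟩) <;>
      have hm' : (m : ℤ) < 2 ^ (p - r).toNat := by exact_mod_cast hm
    · exact ⟨m, by omega, by push_cast; ring⟩
    · exact ⟨-m, by omega, by push_cast; ring⟩
  · rintro ⟨m, hm, rfl⟩
    rcases le_or_gt 0 m with hm0 | hm0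
    · refine Or.inl ⟨m.toNat, by rw [← Nat.cast_lt (α := ℤ)]; push_cast; omega, ?_⟩
      rw [← Int.cast_natCast, Int.toNat_of_nonneg hm0]
    · refine Or.inr ⟨_, ⟨(-m).toNat, by rw [← Nat.cast_lt (α := ℤ)]; push_cast; omega, rfl⟩, ?_⟩
      rw [← Int.cast_natCast, Int.toNat_of_nonneg (by omega)]
      push_cast
      ring

theorem sum_omegaSet (r p : ℤ) (φ : ℝ → ℝ) :
    ∑ x ∈ omegaSet r p, φ x =
      ∑ m ∈ Finset.Ioo (-2 ^ (p - r).toNat : ℤ) (2 ^ (p - r).toNat), φ (m * 2 ^ r) := by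
  rw [omegaSet_eq_image, Finset.sum_image fun m _ n _ hmn => by
    exact_mod_cast mul_right_cancel₀ (zpow_ne_zero r two_ne_zero) hmn]

theorem two_pow_toNat_sub_mul_two_zpow {r p : ℤ} (hrp : r ≤ p) :
    ((2 ^ (p - r).toNat : ℤ) : ℝ) * 2 ^ r = 2 ^ p := by
  push_cast
  rw [← zpow_natCast, Int.toNat_of_nonneg (by omega), ← zpow_add₀ two_ne_zero, sub_add_cancel]

theorem tendsto_two_zpow_atBot : Tendsto (fun n : ℤ => (2 : ℝ) ^ n) atBot (𝓝 0) := by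
  have := (tendsto_rpow_atBot_of_base_gt_one 2 one_lt_two).comp
    (tendsto_intCast_atBot_iff.2 tendsto_id : Tendsto (fun n : ℤ => (n : ℝ)) atBot atBot)
  simpa only [Function.comp_def, Real.rpow_intCast] using this

theorem tendsto_two_zpow_atTop : Tendsto (fun n : ℤ => (2 : ℝ) ^ n) atTop atTop := by
  simpa only [Function.comp_def, Real.rpow_intCast] using
    (tendsto_rpow_atTop_of_base_gt_one 2 one_lt_two).comp tendsto_intCast_atTop_atTop

theorem integral_boltzmann (β : ℝ) (S : Finset ℝ) (H f : ℝ → ℝ) :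
    ∫ x, f x ∂boltzmann β S H =
      (∑ x ∈ S, Real.exp (-β ^ 2 * H x) * f x) / ∑ x ∈ S, Real.exp (-β ^ 2 * H x) := by
  rw [boltzmann, integral_finsetSum_measure fun x _ =>
    (integrable_dirac (by simp)).smul_measure ENNReal.ofReal_ne_top, Finset.sum_div]
  refine Finset.sum_congr rfl fun x _ => ?_
  rw [integral_smul_measure, integral_dirac, ENNReal.toReal_ofReal (by positivity), smul_eq_mul,
    div_mul_eq_mul_div]

theorem boltzmann_tendsto_gaussian_general
    (a b β : ℝ) (ha : a ≠ 0) (hβ : 0 < β)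
    (rk pk : ℕ → ℤ) (hrk : Tendsto rk atTop atBot) (hpk : Tendsto pk atTop atTop) :
    ∀ f : BoundedContinuousFunction ℝ ℝ,
      Tendsto
        (fun k => ∫ x, f x ∂(boltzmann β (omegaSet (rk k) (pk k)) fun x => (a * x - b) ^ 2))
        atTop
        (nhds (∫ x, f x ∂(gaussianReal (b / a) (Real.toNNReal (1 / (2 * a ^ 2 * β ^ 2)))))) := by
  intro f
  have hc : 0 < a ^ 2 * β ^ 2 := by positivity
  have hweight : ∀ x, Real.exp (-β ^ 2 * (a * x - b) ^ 2) =
      Real.exp (-(a ^ 2 * β ^ 2) * (x - b / a) ^ 2) := fun x => by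
    congr 1
    field_simp
  let h : ℕ → ℝ := fun k => 2 ^ rk k
  let N : ℕ → ℤ := fun k => 2 ^ (pk k - rk k).toNat
  have hh : ∀ k, 0 < h k := fun k => zpow_pos two_pos _
  have h0 : Tendsto h atTop (𝓝 0) := tendsto_two_zpow_atBot.comp hrk
  have hN : Tendsto (fun k => N k * h k) atTop atTop := by
    refine (tendsto_two_zpow_atTop.comp hpk).congr' ?_
    filter_upwards [hrk.eventually_le_atBot 0, hpk.eventually_ge_atTop 0] with k hr hp
    exact (two_pow_toNat_sub_mul_two_zpow (by omega)).symm
  have hden := tendsto_mul_sum_Ioo_gaussian 1 hc (b / a) hh h0 hN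
  simp only [BoundedContinuousFunction.coe_one, Pi.one_apply, mul_one] at hden
  have hlim := (tendsto_mul_sum_Ioo_gaussian f hc (b / a) hh h0 hN).div hden
    (integral_exp_neg_mul_sq_sub_pos hc (b / a)).ne'
  rw [mul_assoc, integral_gaussianReal_eq_div hc]
  refine hlim.congr fun k => ?_
  rw [Pi.div_apply, integral_boltzmann, sum_omegaSet, sum_omegaSet,
    mul_div_mul_left _ _ (hh k).ne']
  simp only [hweight, h, N]

/-- As `p → +∞` and `r → -∞`, the Boltzmann distributions `B(β, Ω_{r,p}, (ax-b)²)` converge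
in distribution to the normal law `N(b/a, 1/(2a²β²))`. -/
theorem boltzmann_tendsto_gaussian
    (a b β : ℝ) (ha : a ≠ 0) (hβ : 0 < β)
    (rk pk : ℕ → ℤ) (hrk : Tendsto rk atTop atBot) (hpk : Tendsto pk atTop atTop)
    (hrp : ∀ k, rk k < pk k) :
    ∀ f : BoundedContinuousFunction ℝ ℝ,
      Tendsto
        (fun k => ∫ x, f x ∂(boltzmann β (omegaSet (rk k) (pk k)) fun x => (a * x - b) ^ 2))
        atTop
        (nhds (∫ x, f x ∂(gaussianReal (b / a) (Real.toNNReal (1 / (2 * a ^ 2 * β ^ 2)))))) :=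
  boltzmann_tendsto_gaussian_general a b β ha hβ rk pk hrk hpk
end
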